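/- arXiv:1803.08391 — 3 statements merged into one kernel-verified Lean document; each statement's English description precedes it below -/
import Mathlib

section
/- Let r₁,…,rₙ ∈ ℂ (n ≥ 1) be distinct, let m₁,…,mₙ be positive integers, and set P = ∏_{i=1}^n(X−rᵢ)^{mᵢ} ∈ ℂ[X]. Then P′ = D·Q, where D = ∏_{i=1}^n(X−rᵢ)^{mᵢ−1} and Q = ∑_{i=1}^n mᵢ∏_{j≠i}(X−rⱼ); the polynomial Q satisfies Q(rᵢ) ≠ 0 for every i; and the greatest common divisor of X·P′ − P and P′ in ℂ[X] is associated (equal up to multiplication by a nonzero constant) to D. In other words, the Newton map of P, written as the quotient (X·P′−P)/P′, has common factor exactly ∏(X−rᵢ)^{mᵢ−1}, so its depth at each rᵢ equals mᵢ − 1. -/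
/-!
Write `E = ∏ (X - rᵢ)`. Then `P = D * E` and, by the product rule, `P' = D * Q`, so
`X * P' - P = D * (X * Q - E)`. Since `Q(rᵢ) = mᵢ ∏_{j ≠ i} (rᵢ - rⱼ) ≠ 0`, `Q` is coprime to
every factor of `E`, hence to `E`, hence to `X * Q - E`; so the gcd is `D` up to a unit.
-/

open Finset Polynomial

theorem Finset.prod_pow_pred_mul_prod {ι M : Type*} [CommMonoid M] {s : Finset ι} {f : ι → M}
    {m : ι → ℕ} (hm : ∀ i ∈ s, 0 < m i) :
    (∏ i ∈ s, f i ^ (m i - 1)) * ∏ i ∈ s, f i = ∏ i ∈ s, f i ^ m i := by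
  rw [← prod_mul_distrib]
  exact prod_congr rfl fun i hi => by rw [← pow_succ, Nat.sub_add_cancel (hm i hi)]

theorem EuclideanDomain.gcd_mul_mul_associated_of_isCoprime {R : Type*} [EuclideanDomain R]
    [DecidableEq R] {a b : R} (d : R) (h : IsCoprime a b) :
    Associated (EuclideanDomain.gcd (d * a) (d * b)) d := by
  obtain ⟨u, v, huv⟩ := h
  refine associated_of_dvd_dvd ?_ (dvd_gcd (dvd_mul_right d a) (dvd_mul_right d b))
  have hd : u * (d * a) + v * (d * b) = d := by linear_combination d * huv
  have h := dvd_add ((gcd_dvd_left (d * a) (d * b)).mul_left u) ((gcd_dvd_right _ _).mul_left v)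
  rwa [hd] at h

namespace Polynomial

theorem isCoprime_prod_X_sub_C {ι K : Type*} [Field K] {s : Finset ι} {r : ι → K} {Q : K[X]}
    (hQ : ∀ i ∈ s, Q.eval (r i) ≠ 0) : IsCoprime (∏ i ∈ s, (X - C (r i))) Q :=
  IsCoprime.prod_left fun i hi =>
    (irreducible_X_sub_C (r i)).coprime_iff_not_dvd.mpr (mt dvd_iff_isRoot.mp (hQ i hi))

section

variable {ι : Type*} [Fintype ι] [DecidableEq ι]

theorem derivative_prod_X_sub_C_pow {R : Type*} [CommRing R] {r : ι → R} {m : ι → ℕ}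
    (hm : ∀ i, 0 < m i) :
    derivative (∏ i, (X - C (r i)) ^ m i) =
      (∏ i, (X - C (r i)) ^ (m i - 1)) *
        ∑ i, C (m i : R) * ∏ j ∈ univ.erase i, (X - C (r j)) := by
  rw [derivative_prod_finset, mul_sum]
  refine sum_congr rfl fun i hi => ?_
  rw [derivative_pow, derivative_X_sub_C, ← mul_prod_erase univ _ hi,
    ← prod_pow_pred_mul_prod (s := univ.erase i) fun j _ => hm j]
  ring

theorem eval_sum_C_mul_prod_erase_X_sub_C {R : Type*} [CommRing R] (r c : ι → R) (k : ι) :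
    (∑ i, C (c i) * ∏ j ∈ univ.erase i, (X - C (r j))).eval (r k) =
      c k * ∏ j ∈ univ.erase k, (r k - r j) := by
  simp only [eval_finsetSum, eval_mul, eval_C, eval_prod, eval_sub, eval_X]
  refine sum_eq_single k (fun i _ hik => ?_) (by simp)
  exact mul_eq_zero_of_right _ (prod_eq_zero (mem_erase.mpr ⟨hik.symm, mem_univ k⟩) (sub_self _))

end

end Polynomial

theorem newton_common_factor_general
    (n : ℕ) (r : Fin n → ℂ) (hr : Function.Injective r)
    (m : Fin n → ℕ) (hm : ∀ i, 0 < m i)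
    (P D Q : Polynomial ℂ)
    (hP : P = ∏ i : Fin n, (X - C (r i)) ^ (m i))
    (hD : D = ∏ i : Fin n, (X - C (r i)) ^ (m i - 1))
    (hQ : Q = ∑ i : Fin n, C ((m i : ℂ)) * ∏ j ∈ univ.erase i, (X - C (r j))) :
    P.derivative = D * Q ∧
    (∀ i : Fin n, Q.eval (r i) ≠ 0) ∧
    Associated (EuclideanDomain.gcd (X * P.derivative - P) P.derivative) D := by
  set E : ℂ[X] := ∏ i, (X - C (r i))
  have hPE : P = D * E := by rw [hP, hD, prod_pow_pred_mul_prod fun i _ => hm i]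
  have hder : P.derivative = D * Q := by rw [hP, hD, hQ, derivative_prod_X_sub_C_pow hm]
  have hQr : ∀ i, Q.eval (r i) ≠ 0 := fun i => by
    rw [hQ, eval_sum_C_mul_prod_erase_X_sub_C]
    refine mul_ne_zero (Nat.cast_ne_zero.mpr (hm i).ne') (prod_ne_zero_iff.mpr fun j hj => ?_)
    exact sub_ne_zero.mpr (hr.ne (ne_of_mem_erase hj).symm)
  have hcop : IsCoprime (X * Q - E) Q := by
    simpa only [neg_add_eq_sub, mul_comm Q] using
      (isCoprime_prod_X_sub_C fun i _ => hQr i).neg_left.add_mul_left_left X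
  have hnum : X * P.derivative - P = D * (X * Q - E) := by rw [hder, hPE]; ring
  refine ⟨hder, hQr, ?_⟩
  rw [hnum, hder]
  exact EuclideanDomain.gcd_mul_mul_associated_of_isCoprime D hcop

/-- For `P = ∏ i (X - rᵢ)^{mᵢ}` with `r₁, …, rₙ` distinct (`n ≥ 1`) and `mᵢ ≥ 1`:
`P' = D * Q` where `D = ∏ i (X - rᵢ)^{mᵢ - 1}` and `Q = ∑ i mᵢ ∏_{j≠i} (X - rⱼ)`,
the polynomial `Q` does not vanish at any `rᵢ`, and `gcd (X*P' - P) P'` is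
associated to `D` (so the Newton map of `P` has depth `mᵢ - 1` at each `rᵢ`). -/
theorem newton_common_factor
    (n : ℕ) (hn : 1 ≤ n) (r : Fin n → ℂ) (hr : Function.Injective r)
    (m : Fin n → ℕ) (hm : ∀ i, 0 < m i)
    (P D Q : Polynomial ℂ)
    (hP : P = ∏ i : Fin n, (X - C (r i)) ^ (m i))
    (hD : D = ∏ i : Fin n, (X - C (r i)) ^ (m i - 1))
    (hQ : Q = ∑ i : Fin n, C ((m i : ℂ)) * ∏ j ∈ univ.erase i, (X - C (r j))) :
    P.derivative = D * Q ∧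
    (∀ i : Fin n, Q.eval (r i) ≠ 0) ∧
    Associated (EuclideanDomain.gcd (X * P.derivative - P) P.derivative) D :=
  newton_common_factor_general n r hr m hm P D Q hP hD hQ
end

section
/- Let P and Q be nonconstant monic polynomials in ℂ[X]. If their Newton maps agree wherever both are defined, i.e. z − P(z)/P′(z) = z − Q(z)/Q′(z) for every z ∈ ℂ with P′(z) ≠ 0 and Q′(z) ≠ 0, then P = Q. -/
/-!
Clearing denominators, agreement of the Newton maps off the finitely many critical points says
that the Wronskian `P * Q' - P' * Q` vanishes. Comparing leading coefficients in
`P * R' = P' * R` forces `deg R = deg P` for every nonzero `R` with vanishing Wronskian against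
`P`; applied to `R = Q` and then to `R = P - Q`, which has smaller degree when `P` and `Q` are
monic of the same degree, this gives `P = Q`.
-/

open Polynomial

namespace Polynomial

theorem eq_of_eval_eq_of_eval_ne_zero {R : Type*} [CommRing R] [IsDomain R] [Infinite R]
    {f p q : R[X]} (hf : f ≠ 0) (h : ∀ z, f.eval z ≠ 0 → p.eval z = q.eval z) : p = q :=
  eq_of_infinite_eval_eq p q <|
    (finite_setOfPred_isRoot hf).infinite_compl.mono fun z hz => h z hz

section CharZero

variable {R : Type*} [CommRing R] [IsDomain R] [CharZero R]

theorem natDegree_eq_of_wronskian_eq_zero {p q : R[X]} (hp : p ≠ 0) (hq : q ≠ 0)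
    (hw : wronskian p q = 0) : p.natDegree = q.natDegree := by
  have hlc := congrArg leadingCoeff (sub_eq_zero.1 hw)
  rw [leadingCoeff_mul, leadingCoeff_mul, leadingCoeff_derivative, leadingCoeff_derivative] at hlc
  have hcast : (q.natDegree : R) = p.natDegree :=
    mul_left_cancel₀ (mul_ne_zero (leadingCoeff_ne_zero.2 hp) (leadingCoeff_ne_zero.2 hq))
      (by linear_combination hlc)
  exact (Nat.cast_injective hcast).symm

theorem Monic.eq_of_wronskian_eq_zero {p q : R[X]} (hp : p.Monic) (hq : q.Monic)
    (hw : wronskian p q = 0) : p = q := by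
  have hdeg : p.degree = q.degree := by
    rw [degree_eq_natDegree hp.ne_zero, degree_eq_natDegree hq.ne_zero,
      natDegree_eq_of_wronskian_eq_zero hp.ne_zero hq.ne_zero hw]
  by_contra hne
  have hsub : p - q ≠ 0 := sub_ne_zero.2 hne
  have hw' : wronskian p (p - q) = 0 := by
    rw [← wronskianBilin_apply, map_sub, wronskianBilin_apply, wronskianBilin_apply,
      wronskian_self_eq_zero, hw, sub_zero]
  have hlt : (p - q).natDegree < p.natDegree :=
    natDegree_lt_natDegree hsub
      (degree_sub_lt_left hdeg hp.ne_zero (by rw [hp.leadingCoeff, hq.leadingCoeff]))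
  exact hlt.ne' (natDegree_eq_of_wronskian_eq_zero hp.ne_zero hsub hw')

end CharZero

end Polynomial

/-- Two nonconstant monic complex polynomials whose Newton maps agree wherever
both are defined are equal. -/
theorem newton_map_determines_monic_polynomial
    (P Q : Polynomial ℂ) (hPm : P.Monic) (hQm : Q.Monic)
    (hPd : 0 < P.natDegree) (hQd : 0 < Q.natDegree)
    (h : ∀ z : ℂ, Polynomial.eval z P.derivative ≠ 0 →
      Polynomial.eval z Q.derivative ≠ 0 →
      z - P.eval z / Polynomial.eval z P.derivative
        = z - Q.eval z / Polynomial.eval z Q.derivative) :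
    P = Q := by
  have hP' : P.derivative ≠ 0 := derivative_ne_zero.2 hPd.ne'
  have hQ' : Q.derivative ≠ 0 := derivative_ne_zero.2 hQd.ne'
  refine hPm.eq_of_wronskian_eq_zero hQm (sub_eq_zero.2 ?_)
  refine eq_of_eval_eq_of_eval_ne_zero (mul_ne_zero hP' hQ') fun z hz => ?_
  rw [eval_mul, mul_ne_zero_iff] at hz
  have hquot := sub_right_injective (h z hz.1 hz.2)
  rw [div_eq_div_iff hz.1 hz.2] at hquot
  simp only [eval_mul]
  linear_combination hquot
end

section
/- Let r₁,…,rₙ ∈ ℂ be distinct with positive integers m₁,…,mₙ satisfying m₁+⋯+mₙ ≥ 2, and let s₁,…,s_p ∈ ℂ be distinct with positive integers k₁,…,k_p satisfying k₁+⋯+k_p ≥ 2; let f and g be the corresponding reduced Newton maps. Suppose α, β, γ, δ ∈ ℂ satisfy αδ − βγ ≠ 0, and suppose there is a finite set F ⊂ ℂ such that for every z ∉ F all of the following hold: the denominator of f at z is nonzero, γz + δ ≠ 0, the denominator of g at (αz+β)/(γz+δ) is nonzero, γ·f(z) + δ ≠ 0, and (α·f(z)+β)/(γ·f(z)+δ)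 = g((αz+β)/(γz+δ)). Then γ = 0; i.e., any Möbius transformation conjugating two reduced Newton maps is affine. -/
/-!
If `γ ≠ 0`, the Möbius map `M` sends its pole `z₀ = -δ/γ` to `∞`, which is a fixed point of `g`
with multiplier `e/(e-1)`, where `e = ∑ k`. Hence `z₀` is a fixed point of `f`, i.e. a root
`r i`, whose multiplier is `(m i - 1)/m i`. Conjugate fixed points have equal multipliers, so
`m i * e = (m i - 1) * (e - 1)`, i.e. `m i + e = 1`, which is absurd since `e ≥ 2`.

Algebraically, clearing denominators in homogeneous coordinates turns the conjugacy into an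
identity between polynomial functions of `z`. It holds off the finite set `F`, hence everywhere
by continuity. Evaluating it at `z₀` shows that `z₀` is a root; cancelling the common factor
`γ * z + δ` and evaluating again at `z₀` compares the two multipliers.
-/

open Finset

/-- The denominator `∑ i, m i * ∏_{j ≠ i} (z - r j)` of the reduced Newton map. -/
noncomputable def newtonDenom (n : ℕ) (r : Fin n → ℂ) (m : Fin n → ℕ) (z : ℂ) : ℂ :=
  ∑ i : Fin n, (m i : ℂ) * ∏ j ∈ univ.erase i, (z - r j)

/-- The reduced Newton map `z - ∏ j (z - r j) / ∑ i, m i * ∏_{j ≠ i} (z - r j)`. -/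
noncomputable def reducedNewton (n : ℕ) (r : Fin n → ℂ) (m : Fin n → ℕ) (z : ℂ) : ℂ :=
  z - (∏ j : Fin n, (z - r j)) / newtonDenom n r m z

-- In homogeneous coordinates the reduced Newton map of `(s, k)` is
-- `[x : y] ↦ [homNewtonNum p s k x y : y * homNewtonDenom p s k x y]`.
noncomputable def homProdSub (p : ℕ) (s : Fin p → ℂ) (x y : ℂ) : ℂ :=
  ∏ l, (x - s l * y)

noncomputable def homNewtonDenom (p : ℕ) (s : Fin p → ℂ) (k : Fin p → ℕ) (x y : ℂ) : ℂ :=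
  ∑ j, (k j : ℂ) * ∏ l ∈ univ.erase j, (x - s l * y)

noncomputable def homNewtonNum (p : ℕ) (s : Fin p → ℂ) (k : Fin p → ℕ) (x y : ℂ) : ℂ :=
  x * homNewtonDenom p s k x y - homProdSub p s x y

noncomputable def newtonNum (n : ℕ) (r : Fin n → ℂ) (m : Fin n → ℕ) (z : ℂ) : ℂ :=
  z * newtonDenom n r m z - ∏ j, (z - r j)

section Homogeneous

variable {p : ℕ} (s : Fin p → ℂ) (k : Fin p → ℕ)

theorem homProdSub_mul_self (c w : ℂ) : homProdSub p s (c * w) c = c ^ p * ∏ l, (w - s l) := by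
  simp only [homProdSub, show ∀ l, c * w - s l * c = c * (w - s l) from fun l => by ring,
    prod_mul_distrib, prod_const, card_univ, Fintype.card_fin]

theorem homNewtonDenom_mul_self (c w : ℂ) :
    homNewtonDenom p s k (c * w) c = c ^ (p - 1) * newtonDenom p s k w := by
  simp only [homNewtonDenom, newtonDenom, mul_sum,
    show ∀ l, c * w - s l * c = c * (w - s l) from fun l => by ring,
    prod_mul_distrib, prod_const, card_erase_of_mem (mem_univ _), card_univ, Fintype.card_fin]
  exact sum_congr rfl fun j _ => by ring

theorem homProdSub_zero_right (u : ℂ) : homProdSub p s u 0 = u ^ p := by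
  simp [homProdSub]

theorem homNewtonDenom_zero_right (u : ℂ) :
    homNewtonDenom p s k u 0 = (∑ j, k j : ℕ) * u ^ (p - 1) := by
  simp [homNewtonDenom, card_erase_of_mem, sum_mul]

theorem homNewtonNum_zero_right (hp : p ≠ 0) (u : ℂ) :
    homNewtonNum p s k u 0 = ((∑ j, k j : ℕ) - 1) * u ^ p := by
  rw [homNewtonNum, homNewtonDenom_zero_right, homProdSub_zero_right, ← mul_pow_sub_one hp u]
  ring

end Homogeneous

section Newton

variable {n : ℕ} {r : Fin n → ℂ} (m : Fin n → ℕ)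

theorem newtonNum_eq_reducedNewton_mul {z : ℂ} (h : newtonDenom n r m z ≠ 0) :
    newtonNum n r m z = reducedNewton n r m z * newtonDenom n r m z := by
  rw [newtonNum, reducedNewton]
  field_simp

theorem newtonDenom_apply_self (i : Fin n) :
    newtonDenom n r m (r i) = m i * ∏ j ∈ univ.erase i, (r i - r j) := by
  refine sum_eq_single i (fun i' _ hi' => ?_) (by simp)
  exact mul_eq_zero_of_right _ <|
    prod_eq_zero (mem_erase.mpr ⟨Ne.symm hi', mem_univ i⟩) (sub_self _)

theorem prod_erase_sub_ne_zero (hr : Function.Injective r) (i : Fin n) :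
    ∏ j ∈ univ.erase i, (r i - r j) ≠ 0 :=
  prod_ne_zero_iff.mpr fun _ hj => sub_ne_zero.mpr fun h => (mem_erase.mp hj).1 (hr h).symm

theorem mul_newtonNum_add_mul_newtonDenom {γ δ : ℂ} {i : Fin n} (hi : γ * r i + δ = 0) (z : ℂ) :
    γ * newtonNum n r m z + δ * newtonDenom n r m z
      = (γ * z + δ) * (newtonDenom n r m z - ∏ j ∈ univ.erase i, (z - r j)) := by
  rw [newtonNum, ← mul_prod_erase univ (fun j => z - r j) (mem_univ i)]
  linear_combination (∏ j ∈ univ.erase i, (z - r j)) * hi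

end Newton

theorem Continuous.eq_of_forall_notMem_finset {𝕜 X : Type*} [NontriviallyNormedField 𝕜]
    [CompleteSpace 𝕜] [TopologicalSpace X] [T2Space X] {f g : 𝕜 → X} (hf : Continuous f)
    (hg : Continuous g) (F : Finset 𝕜) (h : ∀ z ∉ F, f z = g z) : f = g :=
  hf.ext_on ((F : Set 𝕜).toFinite.countable.dense_compl 𝕜) hg fun z hz => h z hz

section Conjugacy

variable {n p : ℕ} {r : Fin n → ℂ} {m : Fin n → ℕ} {s : Fin p → ℂ} {k : Fin p → ℕ} {α β γ δ : ℂ}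

-- With `N = newtonNum` and `D = newtonDenom`, so that `f z = N / D`, the pairs
-- `(α * N + β * D, γ * N + δ * D)` and `(homNewtonNum, (γ * z + δ) * homNewtonDenom)` are
-- homogeneous coordinates of `M (f z)` and `g (M z)`; the conjugacy makes them proportional.
theorem mobius_newton_cross_mul_of_conj {z : ℂ} (hD : newtonDenom n r m z ≠ 0)
    (hL : γ * z + δ ≠ 0)
    (hE : newtonDenom p s k ((α * z + β) / (γ * z + δ)) ≠ 0)
    (hfL : γ * reducedNewton n r m z + δ ≠ 0)
    (hconj : (α * reducedNewton n r m z + β) / (γ * reducedNewton n r m z + δ)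
      = reducedNewton p s k ((α * z + β) / (γ * z + δ))) :
    (α * newtonNum n r m z + β * newtonDenom n r m z)
        * ((γ * z + δ) * homNewtonDenom p s k (α * z + β) (γ * z + δ))
      = (γ * newtonNum n r m z + δ * newtonDenom n r m z)
        * homNewtonNum p s k (α * z + β) (γ * z + δ) := by
  have hp : p ≠ 0 := by rintro rfl; simp [newtonDenom] at hE
  set w := (α * z + β) / (γ * z + δ)
  have hA : α * z + β = (γ * z + δ) * w := (mul_div_cancel₀ _ hL).symm
  have hgw : reducedNewton p s k w = w - (∏ l, (w - s l)) / newtonDenom p s k w := rfl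
  have hQ : (∏ l, (w - s l)) / newtonDenom p s k w * newtonDenom p s k w = ∏ l, (w - s l) :=
    div_mul_cancel₀ _ hE
  rw [div_eq_iff hfL, hgw] at hconj
  rw [hA, homNewtonNum, homNewtonDenom_mul_self, homProdSub_mul_self,
    newtonNum_eq_reducedNewton_mul m hD, ← mul_pow_sub_one hp]
  clear_value w
  linear_combination (newtonDenom n r m z * (γ * z + δ) * (γ * z + δ) ^ (p - 1)) *
    (newtonDenom p s k w * hconj - (γ * reducedNewton n r m z + δ) * hQ)

theorem mobius_newton_cross_mul (F : Finset ℂ)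
    (h : ∀ z : ℂ, z ∉ F →
      newtonDenom n r m z ≠ 0 ∧
      γ * z + δ ≠ 0 ∧
      newtonDenom p s k ((α * z + β) / (γ * z + δ)) ≠ 0 ∧
      γ * reducedNewton n r m z + δ ≠ 0 ∧
      (α * reducedNewton n r m z + β) / (γ * reducedNewton n r m z + δ)
        = reducedNewton p s k ((α * z + β) / (γ * z + δ))) :
    ∀ z, (α * newtonNum n r m z + β * newtonDenom n r m z)
        * ((γ * z + δ) * homNewtonDenom p s k (α * z + β) (γ * z + δ))
      = (γ * newtonNum n r m z + δ * newtonDenom n r m z)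
        * homNewtonNum p s k (α * z + β) (γ * z + δ) := by
  refine funext_iff.mp (Continuous.eq_of_forall_notMem_finset ?_ ?_ F fun z hz => ?_)
  · simp only [newtonNum, newtonDenom, homNewtonDenom]
    fun_prop
  · simp only [newtonNum, newtonDenom, homNewtonNum, homNewtonDenom, homProdSub]
    fun_prop
  · obtain ⟨hD, hL, hE, hfL, hconj⟩ := h z hz
    exact mobius_newton_cross_mul_of_conj hD hL hE hfL hconj

theorem mobius_num_ne_zero_of_denom_eq_zero (hdet : α * δ - β * γ ≠ 0) {z : ℂ}
    (hz : γ * z + δ = 0) :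
    α * z + β ≠ 0 := fun hu => hdet (by linear_combination α * hz - γ * hu)

theorem exists_root_eq_mobius_pole (hγ : γ ≠ 0) (hdet : α * δ - β * γ ≠ 0) (hp : p ≠ 0)
    (he : ((∑ j, k j : ℕ) : ℂ) ≠ 1)
    (hcross : ∀ z, (α * newtonNum n r m z + β * newtonDenom n r m z)
        * ((γ * z + δ) * homNewtonDenom p s k (α * z + β) (γ * z + δ))
      = (γ * newtonNum n r m z + δ * newtonDenom n r m z)
        * homNewtonNum p s k (α * z + β) (γ * z + δ)) :
    ∃ i, γ * r i + δ = 0 := by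
  have hz₀ : γ * (-δ / γ) + δ = 0 := by field_simp; ring
  have hcross₀ := hcross (-δ / γ)
  rw [hz₀, zero_mul, mul_zero, homNewtonNum_zero_right _ _ hp] at hcross₀
  have hN : γ * newtonNum n r m (-δ / γ) + δ * newtonDenom n r m (-δ / γ) = 0 :=
    (mul_eq_zero.mp hcross₀.symm).resolve_right
      (mul_ne_zero (sub_ne_zero.mpr he)
        (pow_ne_zero _ (mobius_num_ne_zero_of_denom_eq_zero hdet hz₀)))
  have hP : γ * ∏ j, (-δ / γ - r j) = 0 := by
    rw [newtonNum] at hN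
    linear_combination newtonDenom n r m (-δ / γ) * hz₀ - hN
  obtain ⟨i, -, hi⟩ := prod_eq_zero_iff.mp ((mul_eq_zero.mp hP).resolve_left hγ)
  exact ⟨i, by rw [← sub_eq_zero.mp hi, hz₀]⟩

theorem mobius_newton_cross_mul_cancel (hγ : γ ≠ 0) {i : Fin n} (hi : γ * r i + δ = 0)
    (hcross : ∀ z, (α * newtonNum n r m z + β * newtonDenom n r m z)
        * ((γ * z + δ) * homNewtonDenom p s k (α * z + β) (γ * z + δ))
      = (γ * newtonNum n r m z + δ * newtonDenom n r m z)
        * homNewtonNum p s k (α * z + β) (γ * z + δ)) :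
    ∀ z, (α * newtonNum n r m z + β * newtonDenom n r m z)
        * homNewtonDenom p s k (α * z + β) (γ * z + δ)
      = (newtonDenom n r m z - ∏ j ∈ univ.erase i, (z - r j))
        * homNewtonNum p s k (α * z + β) (γ * z + δ) := by
  refine funext_iff.mp (Continuous.eq_of_forall_notMem_finset ?_ ?_ {r i} fun z hz => ?_)
  · simp only [newtonNum, newtonDenom, homNewtonDenom]
    fun_prop
  · simp only [newtonDenom, homNewtonNum, homNewtonDenom, homProdSub]
    fun_prop
  · have hL : γ * z + δ ≠ 0 := by
      rw [show γ * z + δ = γ * (z - r i) by linear_combination hi]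
      exact mul_ne_zero hγ (sub_ne_zero.mpr (by simpa using hz))
    refine mul_left_cancel₀ hL ?_
    linear_combination hcross z +
      mul_newtonNum_add_mul_newtonDenom m hi z * homNewtonNum p s k (α * z + β) (γ * z + δ)

theorem mobius_newton_multiplier_eq (hr : Function.Injective r) (hp : p ≠ 0) {i : Fin n}
    (hi : γ * r i + δ = 0) (hu : α * r i + β ≠ 0)
    (hcancel : (α * newtonNum n r m (r i) + β * newtonDenom n r m (r i))
        * homNewtonDenom p s k (α * r i + β) (γ * r i + δ)
      = (newtonDenom n r m (r i) - ∏ j ∈ univ.erase i, (r i - r j))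
        * homNewtonNum p s k (α * r i + β) (γ * r i + δ)) :
    (m i : ℂ) * (∑ j, k j : ℕ) = (m i - 1) * ((∑ j, k j : ℕ) - 1) := by
  rw [hi, homNewtonDenom_zero_right, homNewtonNum_zero_right _ _ hp, newtonNum,
    newtonDenom_apply_self, prod_eq_zero (mem_univ i) (sub_self _)] at hcancel
  have hprod : (∏ j ∈ univ.erase i, (r i - r j)) * (α * r i + β) ^ p ≠ 0 :=
    mul_ne_zero (prod_erase_sub_ne_zero hr i) (pow_ne_zero _ hu)
  refine mul_right_cancel₀ hprod ?_
  rw [← mul_pow_sub_one hp] at hcancel ⊢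
  linear_combination hcancel

end Conjugacy

theorem mobius_conjugating_newton_maps_is_affine_general
    (n p : ℕ) (r : Fin n → ℂ) (hr : Function.Injective r)
    (m : Fin n → ℕ)
    (s : Fin p → ℂ)
    (k : Fin p → ℕ) (hdk : 2 ≤ ∑ j : Fin p, k j)
    (α β γ δ : ℂ) (hdet : α * δ - β * γ ≠ 0)
    (F : Finset ℂ)
    (h : ∀ z : ℂ, z ∉ F →
      newtonDenom n r m z ≠ 0 ∧
      γ * z + δ ≠ 0 ∧
      newtonDenom p s k ((α * z + β) / (γ * z + δ)) ≠ 0 ∧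
      γ * reducedNewton n r m z + δ ≠ 0 ∧
      (α * reducedNewton n r m z + β) / (γ * reducedNewton n r m z + δ)
        = reducedNewton p s k ((α * z + β) / (γ * z + δ))) :
    γ = 0 := by
  by_contra hγ
  have hp : p ≠ 0 := by rintro rfl; simp at hdk
  have he : ((∑ j, k j : ℕ) : ℂ) ≠ 1 := by exact_mod_cast (by omega : ∑ j, k j ≠ 1)
  have hcross := mobius_newton_cross_mul F h
  obtain ⟨i, hi⟩ := exists_root_eq_mobius_pole hγ hdet hp he hcross
  have hmult := mobius_newton_multiplier_eq hr hp hi (mobius_num_ne_zero_of_denom_eq_zero hdet hi)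
    (mobius_newton_cross_mul_cancel hγ hi hcross (r i))
  have hsum : ((m i + ∑ j, k j : ℕ) : ℂ) = 1 := by rw [Nat.cast_add]; linear_combination hmult
  have := Nat.cast_eq_one.mp hsum
  omega

/-- Any Möbius transformation `z ↦ (αz+β)/(γz+δ)` (with `αδ - βγ ≠ 0`) conjugating
one nonconstant reduced Newton map `f` to another `g` — in the sense that
`(α f(z) + β)/(γ f(z) + δ) = g((αz+β)/(γz+δ))` for all `z` outside some finite set
on which all denominators are nonzero — must be affine, i.e. `γ = 0`. -/
theorem mobius_conjugating_newton_maps_is_affine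
    (n p : ℕ) (r : Fin n → ℂ) (hr : Function.Injective r)
    (m : Fin n → ℕ) (hm : ∀ i, 0 < m i) (hdm : 2 ≤ ∑ i : Fin n, m i)
    (s : Fin p → ℂ) (hs : Function.Injective s)
    (k : Fin p → ℕ) (hk : ∀ j, 0 < k j) (hdk : 2 ≤ ∑ j : Fin p, k j)
    (α β γ δ : ℂ) (hdet : α * δ - β * γ ≠ 0)
    (F : Finset ℂ)
    (h : ∀ z : ℂ, z ∉ F →
      newtonDenom n r m z ≠ 0 ∧
      γ * z + δ ≠ 0 ∧
      newtonDenom p s k ((α * z + β) / (γ * z + δ)) ≠ 0 ∧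
      γ * reducedNewton n r m z + δ ≠ 0 ∧
      (α * reducedNewton n r m z + β) / (γ * reducedNewton n r m z + δ)
        = reducedNewton p s k ((α * z + β) / (γ * z + δ))) :
    γ = 0 :=
  mobius_conjugating_newton_maps_is_affine_general n p r hr m s k hdk α β γ δ hdet F h
end
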